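/- arXiv:2311.03403 — 2 statements merged into one kernel-verified Lean document; each statement's English description precedes it below -/
import Mathlib

section
/- Let A be a unital C*-algebra and n ≥ 1. If the set Lg_n(A)_sa of self-adjoint n-tuples (a_1,...,a_n) with a_1²+...+a_n² invertible is dense in (A_sa)^n, then Lg_{n+1}(A)_sa is dense in (A_sa)^{n+1}. -/
open scoped MultiplierAlgebra

namespace RR

/-- `Lg_n(A)_sa` is dense in `A_sa^n`: every self-adjoint `n`-tuple can be approximated by a
self-adjoint unimodular `n`-tuple (one whose sum of squares is invertible). -/
def LgSaDense (A : Type*) [CStarAlgebra A] (n : ℕ) : Prop :=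
  ∀ a : Fin n → A, (∀ i, IsSelfAdjoint (a i)) → ∀ ε : ℝ, 0 < ε →
    ∃ b : Fin n → A, (∀ i, IsSelfAdjoint (b i)) ∧ IsUnit (∑ i, b i ^ 2) ∧ ∀ i, ‖a i - b i‖ < ε

/-- The real rank of a unital C*-algebra: the least `n` such that `Lg_{n+1}(A)_sa` is dense
in `A_sa^{n+1}` (`∞` if there is no such `n`). -/
noncomputable def uRealRank (A : Type*) [CStarAlgebra A] : ℕ∞ :=
  sInf {c : ℕ∞ | ∃ n : ℕ, c = n ∧ LgSaDense A (n + 1)}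

/-- The real rank of a (possibly nonunital) C*-algebra, defined via its unitization.
(For unital `A` this agrees with `uRealRank A`, since `rr (A ⊕ ℂ) = rr A`.) -/
noncomputable def realRank (A : Type*) [NonUnitalCStarAlgebra A] : ℕ∞ :=
  uRealRank (Unitization ℂ A)

end RR

/-!
A sum of squares of self-adjoint elements that is invertible is strictly positive, and adding
a further positive term `c ^ 2` keeps it strictly positive, hence invertible. So to approximate
a self-adjoint `(n + 1)`-tuple it suffices to approximate its first `n` entries by a tuple in
`Lg_n(A)_sa` and to keep the last entry unchanged.
-/

section

variable {A : Type*} [CStarAlgebra A]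

lemma isSelfAdjoint_snoc {n : ℕ} {b : Fin n → A} (hb : ∀ i, IsSelfAdjoint (b i)) {c : A}
    (hc : IsSelfAdjoint c) (i : Fin (n + 1)) :
    IsSelfAdjoint ((Fin.snoc b c : Fin (n + 1) → A) i) :=
  Fin.lastCases (by simpa using hc) (fun j ↦ by simpa using hb j) i

lemma isUnit_sum_sq_snoc {n : ℕ} {b : Fin n → A} (hb : ∀ i, IsSelfAdjoint (b i))
    (hu : IsUnit (∑ i, b i ^ 2)) {c : A} (hc : IsSelfAdjoint c) :
    IsUnit (∑ i, (Fin.snoc b c : Fin (n + 1) → A) i ^ 2) := by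
  let _ := CStarAlgebra.spectralOrder A
  let _ := CStarAlgebra.spectralOrderedRing A
  rw [Fin.sum_univ_castSucc]
  simp only [Fin.snoc_castSucc, Fin.snoc_last]
  have hpos : IsStrictlyPositive (∑ i, b i ^ 2) :=
    ⟨Finset.sum_nonneg fun i _ ↦ (hb i).sq_nonneg, hu⟩
  exact (hpos.add_nonneg hc.sq_nonneg).isUnit

end

theorem lgSaDense_succ_general (A : Type*) [CStarAlgebra A] (n : ℕ)
    (h : RR.LgSaDense A n) : RR.LgSaDense A (n + 1) := by
  intro a ha ε hε
  obtain ⟨b, hb, hbu, hba⟩ := h (fun i ↦ a i.castSucc) (fun i ↦ ha i.castSucc) ε hε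
  have hlast := ha (Fin.last n)
  refine ⟨Fin.snoc b (a (Fin.last n)), isSelfAdjoint_snoc hb hlast,
    isUnit_sum_sq_snoc hb hbu hlast, fun i ↦ ?_⟩
  exact Fin.lastCases (by simpa using hε) (fun j ↦ by simpa using hba j) i

/-- For a unital C*-algebra `A` and `n ≥ 1`, if `Lg_n(A)_sa` is dense in
`(A_sa)^n`, then `Lg_{n+1}(A)_sa` is dense in `(A_sa)^{n+1}`. -/
theorem lgSaDense_succ (A : Type*) [CStarAlgebra A] (n : ℕ) (hn : 1 ≤ n)
    (h : RR.LgSaDense A n) : RR.LgSaDense A (n + 1) :=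
  lgSaDense_succ_general A n h
end

section
/- Let 0 → A → E → B → 0 be an extension of C*-algebras with E unital, let n ∈ ℕ be such that A has property (Λ_n), let (a_0,...,a_n) ∈ (E_sa)^{n+1} be such that (π(a_0),...,π(a_n)) ∈ Lg_{n+1}(B)_sa, and let ε > 0. Then there exists (b_0,...,b_n) ∈ Lg_{n+1}(E)_sa with ‖a_j − b_j‖ < ε and π(a_j) = π(b_j) for j = 0,...,n. -/
/-!
Via the Busby map `σ : E → 𝓜(A)` and `π`, the algebra `E` is the pullback of
`𝓜(A) → 𝓜(A)/A ← B`. Hence an element of `E` is invertible as soon as its images under `σ` and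
`π` are, and every self-adjoint `y ∈ 𝓜(A)` with `y ≡ σ x (mod A)` is `σ z` for a self-adjoint
`z = x - ι d` with `π z = π x` and `‖x - z‖ = ‖σ x - y‖`. The tuple `σ(a)` is unimodular modulo
`A` because `π(a)` is unimodular, so `(Λ_n)` approximates it by a unimodular tuple with the same
image in the corona, and lifting that tuple back to `E` gives `b`.
-/

open scoped MultiplierAlgebra

namespace RR

/-- The canonical image of `A` as an ideal in its multiplier algebra `𝓜(ℂ, A)`. -/
noncomputable def mIdeal (A : Type*) [NonUnitalCStarAlgebra A] : Set 𝓜(ℂ, A) :=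
  Set.range (DoubleCentralizer.coe ℂ : A → 𝓜(ℂ, A))

/-- Property `(Λ_n)`: every self-adjoint `(n+1)`-tuple in `M(A)` whose image in the corona
`M(A)/A` is unimodular (i.e. whose sum of squares is invertible modulo `A`) can be approximated
arbitrarily well, keeping the same image modulo `A`, by a unimodular self-adjoint tuple. -/
def Lambda (A : Type*) [NonUnitalCStarAlgebra A] (n : ℕ) : Prop :=
  ∀ a : Fin (n + 1) → 𝓜(ℂ, A), (∀ i, IsSelfAdjoint (a i)) →
    (∃ c : 𝓜(ℂ, A), c * (∑ i, a i ^ 2) - 1 ∈ mIdeal A ∧ (∑ i, a i ^ 2) * c - 1 ∈ mIdeal A) →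
    ∀ ε : ℝ, 0 < ε →
      ∃ b : Fin (n + 1) → 𝓜(ℂ, A), (∀ i, IsSelfAdjoint (b i)) ∧ IsUnit (∑ i, b i ^ 2) ∧
        ∀ i, ‖a i - b i‖ < ε ∧ a i - b i ∈ mIdeal A

/-- The extension real rank `xrr(A)`: the least `n` such that `A` has `(Λ_m)` for all `m ≥ n`. -/
noncomputable def xrr (A : Type*) [NonUnitalCStarAlgebra A] : ℕ∞ :=
  sInf {c : ℕ∞ | ∃ n : ℕ, c = n ∧ ∀ m : ℕ, n ≤ m → Lambda A m}

end RR

open Function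

theorem map_one_of_surjective {F M N : Type*} [MulOneClass M] [MulOneClass N] [FunLike F M N]
    [MulHomClass F M N] (f : F) (hf : Surjective f) : f 1 = 1 := by
  obtain ⟨x, hx⟩ := hf 1
  calc f 1 = f 1 * f x := by rw [hx, mul_one]
    _ = 1 := by rw [← map_mul, one_mul, hx]

theorem map_sum_sq {F R S ι : Type*} [Semiring R] [Semiring S] [FunLike F R S]
    [NonUnitalRingHomClass F R S] (f : F) (s : Finset ι) (x : ι → R) :
    f (∑ i ∈ s, x i ^ 2) = ∑ i ∈ s, f (x i) ^ 2 := by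
  simp only [map_sum, sq, map_mul]

namespace DoubleCentralizer

variable {A : Type*} [NonUnitalCStarAlgebra A]

theorem norm_coe (a : A) : ‖(a : 𝓜(ℂ, A))‖ = ‖a‖ := by
  rw [← norm_fst, coe_fst, ContinuousLinearMap.opNorm_mul_apply]

theorem coe_injective : Injective (DoubleCentralizer.coe ℂ : A → 𝓜(ℂ, A)) :=
  ((AddMonoidHomClass.isometry_iff_norm (coeHom : A →⋆ₙₐ[ℂ] 𝓜(ℂ, A))).2 norm_coe).injective

theorem snd_mul_left (z : 𝓜(ℂ, A)) (x k : A) : z.snd (x * k) = x * z.snd k := by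
  -- `w * star w = 0` forces `w = 0`, and centrality of `z` makes `w * star w` vanish
  rw [← sub_eq_zero, ← CStarRing.mul_star_self_eq_zero_iff]
  simp only [sub_mul, z.central, mul_assoc, sub_self]

theorem coe_mul_eq_coe_snd (k : A) (z : 𝓜(ℂ, A)) : (k : 𝓜(ℂ, A)) * z = (z.snd k : A) := by
  ext x : 3
  · exact (z.central k x).symm
  · exact snd_mul_left z x k

end DoubleCentralizer

namespace RR

section Busby

variable {A E : Type*} [NonUnitalCStarAlgebra A] [NonUnitalCStarAlgebra E] {ι : A →⋆ₙₐ[ℂ] E}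

noncomputable def restrictIdeal (hι : Injective ι) (T : E →L[ℂ] E)
    (hT : ∀ c, T (ι c) ∈ Set.range ι) : A →L[ℂ] A :=
  LinearMap.mkContinuous
    { toFun := fun c => invFun ι (T (ι c))
      map_add' := fun c d => hι <| by
        rw [invFun_eq (hT _), map_add, map_add, map_add, invFun_eq (hT _), invFun_eq (hT _)]
      map_smul' := fun s c => hι <| by
        rw [invFun_eq (hT _), map_smul, map_smul, map_smul, invFun_eq (hT _), RingHom.id_apply] }
    ‖T‖ fun c => by
      simp only [LinearMap.coe_mk, AddHom.coe_mk]
      rw [← NonUnitalStarAlgHom.norm_map ι hι, invFun_eq (hT c),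
        ← NonUnitalStarAlgHom.norm_map ι hι c]
      exact T.le_opNorm _

theorem apply_restrictIdeal (hι : Injective ι) (T : E →L[ℂ] E) (hT : ∀ c, T (ι c) ∈ Set.range ι)
    (c : A) : ι (restrictIdeal hι T hT c) = T (ι c) :=
  invFun_eq (hT c)

theorem multiplier_ext_of_injective (hι : Injective ι) {x y : 𝓜(ℂ, A)}
    (hfst : ∀ c, ι (x.fst c) = ι (y.fst c)) (hsnd : ∀ c, ι (x.snd c) = ι (y.snd c)) : x = y := by
  ext c : 3
  exacts [hι (hfst c), hι (hsnd c)]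

variable (hι : Injective ι) (hL : ∀ e c, e * ι c ∈ Set.range ι)
  (hR : ∀ e c, ι c * e ∈ Set.range ι)

/-- Busby's map `E → 𝓜(A)`: `e` acts on the ideal `ι A ≅ A` by left and right
multiplication. -/
noncomputable def busby : E →⋆ₙₐ[ℂ] 𝓜(ℂ, A) where
  toFun e :=
    { fst := restrictIdeal hι (ContinuousLinearMap.mul ℂ E e) fun c => by
        rw [ContinuousLinearMap.mul_apply']; exact hL e c
      snd := restrictIdeal hι ((ContinuousLinearMap.mul ℂ E).flip e) fun c => by
        rw [ContinuousLinearMap.flip_apply, ContinuousLinearMap.mul_apply']; exact hR e c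
      central x y := hι <| by simp [apply_restrictIdeal, mul_assoc] }
  map_smul' s e := multiplier_ext_of_injective hι (by simp [apply_restrictIdeal])
    (by simp [apply_restrictIdeal])
  map_zero' := multiplier_ext_of_injective hι (by simp [apply_restrictIdeal])
    (by simp [apply_restrictIdeal])
  map_add' e f := multiplier_ext_of_injective hι (by simp [apply_restrictIdeal])
    (by simp [apply_restrictIdeal])
  map_mul' e f := multiplier_ext_of_injective hι (by simp [apply_restrictIdeal, mul_assoc])
    (by simp [apply_restrictIdeal, mul_assoc])
  map_star' e := multiplier_ext_of_injective hι (by simp [apply_restrictIdeal, map_star])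
    (by simp [apply_restrictIdeal, map_star])

@[simp]
theorem apply_busby_fst (e : E) (c : A) : ι ((busby hι hL hR e).fst c) = e * ι c := by
  simp [busby, apply_restrictIdeal]

@[simp]
theorem apply_busby_snd (e : E) (c : A) : ι ((busby hι hL hR e).snd c) = ι c * e := by
  simp [busby, apply_restrictIdeal]

theorem busby_apply (a : A) : busby hι hL hR (ι a) = a :=
  multiplier_ext_of_injective hι (by simp) (by simp)

end Busby

theorem busby_one {A E : Type*} [NonUnitalCStarAlgebra A] [CStarAlgebra E] {ι : A →⋆ₙₐ[ℂ] E}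
    (hι : Injective ι) (hL : ∀ e c, e * ι c ∈ Set.range ι) (hR : ∀ e c, ι c * e ∈ Set.range ι) :
    busby hι hL hR 1 = 1 :=
  multiplier_ext_of_injective hι (by simp) (by simp)

section Extension

variable {A E B : Type*} [NonUnitalCStarAlgebra A] [CStarAlgebra E] [CStarAlgebra B]
  {ι : A →⋆ₙₐ[ℂ] E} {π : E →⋆ₙₐ[ℂ] B} (hexact : ∀ x : E, π x = 0 ↔ x ∈ Set.range ι)
  {σ : E →⋆ₙₐ[ℂ] 𝓜(ℂ, A)} (hσι : ∀ a, σ (ι a) = a)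
include hexact hσι

theorem busby_mem_mIdeal {x : E} (hx : π x = 0) : σ x ∈ mIdeal A := by
  obtain ⟨k, rfl⟩ := (hexact x).1 hx
  exact ⟨k, (hσι k).symm⟩

theorem eq_zero_of_busby_eq_zero {x : E} (hσx : σ x = 0) (hπx : π x = 0) : x = 0 := by
  obtain ⟨k, rfl⟩ := (hexact x).1 hπx
  rw [hσι, ← map_zero (DoubleCentralizer.coeHom : A →⋆ₙₐ[ℂ] 𝓜(ℂ, A))] at hσx
  rw [DoubleCentralizer.coe_injective hσx, map_zero]

theorem exists_selfAdjoint_lift (hι : Injective ι) {x : E} {y : 𝓜(ℂ, A)} (hx : IsSelfAdjoint x)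
    (hy : IsSelfAdjoint y) (h : σ x - y ∈ mIdeal A) :
    ∃ z, IsSelfAdjoint z ∧ σ z = y ∧ π z = π x ∧ ‖x - z‖ = ‖σ x - y‖ := by
  obtain ⟨d, hd⟩ := h
  have hd_sa : IsSelfAdjoint d := DoubleCentralizer.coe_injective <| by
    rw [← DoubleCentralizer.coeHom_apply, map_star, DoubleCentralizer.coeHom_apply, hd]
    exact (hx.map σ).sub hy
  refine ⟨x - ι d, hx.sub (hd_sa.map ι), ?_, ?_, ?_⟩
  · rw [map_sub, hσι, hd, sub_sub_cancel]
  · rw [map_sub, (hexact _).2 ⟨d, rfl⟩, sub_zero]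
  · rw [sub_sub_cancel, NonUnitalStarAlgHom.norm_map ι hι, ← hd, DoubleCentralizer.norm_coe]

variable (hπ : Surjective π) (hσ1 : σ 1 = 1)
include hπ hσ1

theorem exists_inv_busby_mod_mIdeal {s : E} (hs : IsUnit (π s)) :
    ∃ c : 𝓜(ℂ, A), c * σ s - 1 ∈ mIdeal A ∧ σ s * c - 1 ∈ mIdeal A := by
  obtain ⟨e, he⟩ := hπ ↑hs.unit⁻¹
  have hπ1 := map_one_of_surjective π hπ
  refine ⟨σ e, ?_, ?_⟩
  · rw [← hσ1, ← map_mul, ← map_sub]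
    exact busby_mem_mIdeal hexact hσι <| by
      rw [map_sub, map_mul, he, hπ1, hs.val_inv_mul, sub_self]
  · rw [← hσ1, ← map_mul, ← map_sub]
    exact busby_mem_mIdeal hexact hσι <| by
      rw [map_sub, map_mul, he, hπ1, hs.mul_val_inv, sub_self]

theorem exists_mul_eq_one_of_isUnit_busby {t : E} (hσt : IsUnit (σ t)) (hπt : IsUnit (π t)) :
    ∃ x, x * t = 1 := by
  obtain ⟨e, he⟩ := hπ ↑hπt.unit⁻¹
  have hπ1 := map_one_of_surjective π hπ
  obtain ⟨k, hk⟩ := (hexact (e * t - 1)).1 <| by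
    rw [map_sub, map_mul, he, hπ1, hπt.val_inv_mul, sub_self]
  -- correct `e` by the element of `ι A` whose image under `σ` is `k σ(t)⁻¹`
  set k' := (↑hσt.unit⁻¹ : 𝓜(ℂ, A)).snd k
  refine ⟨e - ι k', sub_eq_zero.1 (eq_zero_of_busby_eq_zero hexact hσι ?_ ?_)⟩
  · rw [map_sub, map_mul, map_sub, hσι, hσ1, ← DoubleCentralizer.coe_mul_eq_coe_snd, sub_mul,
      mul_assoc, hσt.val_inv_mul, mul_one, ← map_mul, ← hσι k, hk, map_sub, hσ1]
    abel
  · rw [map_sub, map_mul, map_sub, (hexact _).2 ⟨k', rfl⟩, sub_zero, he, hπt.val_inv_mul, hπ1,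
      sub_self]

theorem isUnit_of_isUnit_busby {t : E} (hσt : IsUnit (σ t)) (hπt : IsUnit (π t)) : IsUnit t := by
  obtain ⟨x, hx⟩ := exists_mul_eq_one_of_isUnit_busby hexact hσι hπ hσ1 hσt hπt
  obtain ⟨y, hy⟩ := exists_mul_eq_one_of_isUnit_busby hexact hσι hπ hσ1
    (by rw [map_star]; exact hσt.star) (by rw [map_star]; exact hπt.star)
  refine isUnit_iff_exists_and_exists.2 ⟨⟨star y, ?_⟩, ⟨x, hx⟩⟩
  simpa using congrArg star hy

end Extension

end RR

/-- Given an extension `0 → A → E → B → 0` with `E` unital, if `A` has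
`(Λ_n)` and `(π(a_0), …, π(a_n))` is unimodular in `B`, then for every `ε > 0` there is a
unimodular self-adjoint tuple `(b_0, …, b_n)` in `E` with `‖a_j - b_j‖ < ε` and
`π(a_j) = π(b_j)` for all `j`. -/
theorem lambda_lift_extension (A E B : Type*) [NonUnitalCStarAlgebra A] [CStarAlgebra E]
    [CStarAlgebra B]
    (ι : A →⋆ₙₐ[ℂ] E) (π : E →⋆ₙₐ[ℂ] B)
    (hι : Function.Injective ι) (hπ : Function.Surjective π)
    (hexact : ∀ x : E, π x = 0 ↔ x ∈ Set.range ι)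
    (n : ℕ) (hΛ : RR.Lambda A n)
    (a : Fin (n + 1) → E) (ha : ∀ i, IsSelfAdjoint (a i))
    (haB : IsUnit (∑ i, (π (a i)) ^ 2)) (ε : ℝ) (hε : 0 < ε) :
    ∃ b : Fin (n + 1) → E, (∀ i, IsSelfAdjoint (b i)) ∧ IsUnit (∑ i, b i ^ 2) ∧
      ∀ i, ‖a i - b i‖ < ε ∧ π (a i) = π (b i) := by
  have hπι (c : A) : π (ι c) = 0 := (hexact _).2 ⟨c, rfl⟩
  have hL (e : E) (c : A) : e * ι c ∈ Set.range ι :=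
    (hexact _).1 (by rw [map_mul, hπι, mul_zero])
  have hR (e : E) (c : A) : ι c * e ∈ Set.range ι :=
    (hexact _).1 (by rw [map_mul, hπι, zero_mul])
  obtain ⟨σ, hσι, hσ1⟩ : ∃ σ : E →⋆ₙₐ[ℂ] 𝓜(ℂ, A), (∀ c, σ (ι c) = c) ∧ σ 1 = 1 :=
    ⟨RR.busby hι hL hR, RR.busby_apply hι hL hR, RR.busby_one hι hL hR⟩
  have hσa_inv := RR.exists_inv_busby_mod_mIdeal hexact hσι hπ hσ1 (s := ∑ i, a i ^ 2)
    (by rwa [map_sum_sq])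
  rw [map_sum_sq] at hσa_inv
  obtain ⟨b', hb'_sa, hb'_unit, hb'⟩ :=
    hΛ (fun i => σ (a i)) (fun i => (ha i).map σ) hσa_inv ε hε
  choose b hb_sa hσb hπb hb_norm using fun i =>
    RR.exists_selfAdjoint_lift hexact hσι hι (ha i) (hb'_sa i) (hb' i).2
  refine ⟨b, hb_sa, RR.isUnit_of_isUnit_busby hexact hσι hπ hσ1 ?_ ?_,
    fun i => ⟨(hb_norm i).trans_lt (hb' i).1, (hπb i).symm⟩⟩
  · simpa only [map_sum_sq, hσb] using hb'_unit
  · simpa only [map_sum_sq, hπb] using haB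
end
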